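/- For the multivariate Lomax distribution on ℝ^d with density p(x) ∝ (‖x‖₁ + β)^{−(d+α)} where α > 2, the second moment matrix satisfies E[x xᵀ] = (2β²/((α−1)(α−2))) I_d. -/

import Mathlib

/-!
Fubini, splitting off one coordinate `y`, turns `∫_{ℝ^{n+1}} (‖x‖₁ + c)^{-s}` into the integral
over `ℝ` of the `n`-dimensional one with `c` replaced by `|y| + c`. By induction on `n` this gives
`∫_{ℝ^n} (‖x‖₁ + c)^{-s} = 2^n Γ(s-n)/Γ(s) c^{n-s}`, and the marginal of a single coordinate is
proportional to `(|y| + c)^{n-s}`. Its second moment is an elementary one-dimensional integral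
(expand `y² = (u - c)²` with `u = |y| + c`). The off-diagonal moments vanish because the density
is even in each coordinate.
-/

open Real MeasureTheory Set

lemma Real.Gamma_eq_mul_Gamma_sub_two {t : ℝ} (ht : 2 < t) :
    Gamma t = (t - 1) * (t - 2) * Gamma (t - 2) := by
  have h1 := Gamma_add_one (s := t - 1) (by linarith)
  have h2 := Gamma_add_one (s := t - 2) (by linarith)
  rw [sub_add_cancel] at h1
  rw [h1, show t - 1 = t - 2 + 1 by ring, h2]
  ring

section Line

lemma integral_comp_abs_add (f : ℝ → ℝ) (c : ℝ) :
    ∫ y, f (|y| + c) = 2 * ∫ u in Ioi c, f u := by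
  have hshift := (measurePreserving_add_right volume c).setIntegral_preimage_emb
    (measurableEmbedding_addRight c) f (Ioi c)
  rw [preimage_add_const_Ioi, sub_self] at hshift
  rw [integral_comp_abs (f := fun y => f (y + c)), hshift]

lemma integrable_comp_abs_add {f : ℝ → ℝ} {c : ℝ} (hf : IntegrableOn f (Ioi c)) :
    Integrable (fun y => f (|y| + c)) := by
  have hpos : IntegrableOn (fun y => f (|y| + c)) (Ioi 0) := by
    rw [← (measurePreserving_add_right volume c).integrableOn_comp_preimage
      (measurableEmbedding_addRight c), preimage_add_const_Ioi, sub_self] at hf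
    exact hf.congr_fun (fun y hy => by
      simp only [Function.comp_apply, abs_of_pos (mem_Ioi.mp hy)]) measurableSet_Ioi
  have hneg : IntegrableOn (fun y => f (|y| + c)) (Iic 0) := by
    rw [← (Measure.measurePreserving_neg volume).integrableOn_comp_preimage
      (Homeomorph.neg ℝ).measurableEmbedding, neg_preimage, neg_Iic, neg_zero]
    simpa only [Function.comp_def, abs_neg] using
      (integrableOn_Ici_iff_integrableOn_Ioi).mpr hpos
  simpa only [Iic_union_Ioi, integrableOn_univ] using hneg.union hpos

variable {c t : ℝ}

lemma integrable_and_integral_abs_add_rpow_neg (ht : 1 < t) (hc : 0 < c) :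
    Integrable (fun y : ℝ => (|y| + c) ^ (-t)) ∧
      ∫ y, (|y| + c) ^ (-t) = 2 * c ^ (1 - t) / (t - 1) := by
  refine ⟨integrable_comp_abs_add (integrableOn_Ioi_rpow_of_lt (by linarith) hc), ?_⟩
  rw [integral_comp_abs_add (fun u => u ^ (-t)), integral_Ioi_rpow_of_lt (by linarith) hc,
    show -t + 1 = -(t - 1) by ring, show 1 - t = -(t - 1) by ring]
  field_simp

lemma integrableOn_and_integral_Ioi_sub_sq_mul_rpow_neg (ht : 3 < t) (hc : 0 < c) :
    IntegrableOn (fun u : ℝ => (u - c) ^ 2 * u ^ (-t)) (Ioi c) ∧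
      ∫ u in Ioi c, (u - c) ^ 2 * u ^ (-t) = 2 * c ^ (3 - t) / ((t - 1) * (t - 2) * (t - 3)) := by
  have i2 := integrableOn_Ioi_rpow_of_lt (show -t + 2 < -1 by linarith) hc
  have i1 := (integrableOn_Ioi_rpow_of_lt (show -t + 1 < -1 by linarith) hc).const_mul (2 * c)
  have i0 := (integrableOn_Ioi_rpow_of_lt (show -t < -1 by linarith) hc).const_mul (c ^ 2)
  have hexpand : EqOn (fun u : ℝ => (u - c) ^ 2 * u ^ (-t))
      (fun u => u ^ (-t + 2) - 2 * c * u ^ (-t + 1) + c ^ 2 * u ^ (-t)) (Ioi c) := fun u hu => by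
    simp only [rpow_add (hc.trans hu), rpow_one, rpow_two]
    ring
  refine ⟨((i2.sub i1).add i0).congr_fun hexpand.symm measurableSet_Ioi, ?_⟩
  rw [setIntegral_congr_fun measurableSet_Ioi hexpand,
    integral_add (f := fun u => u ^ (-t + 2) - 2 * c * u ^ (-t + 1)) (i2.sub i1) i0,
    integral_sub i2 i1, integral_const_mul, integral_const_mul,
    integral_Ioi_rpow_of_lt (by linarith) hc, integral_Ioi_rpow_of_lt (by linarith) hc,
    integral_Ioi_rpow_of_lt (by linarith) hc]
  have e3 : c ^ (3 - t) = c ^ 2 * c ^ (-t + 1) := by rw [← rpow_two, ← rpow_add hc]; ring_nf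
  have e2 : c ^ (-t + 1 + 1) = c * c ^ (-t + 1) := by rw [rpow_add_one hc.ne']; ring
  have e1 : c ^ (-t + 2 + 1) = c ^ 2 * c ^ (-t + 1) := by rw [← rpow_two, ← rpow_add hc]; ring_nf
  rw [e1, e2, e3]
  have : t - 1 ≠ 0 := by linarith
  have : t - 2 ≠ 0 := by linarith
  have : t - 3 ≠ 0 := by linarith
  have : -t + 1 ≠ 0 := by linarith
  have : -t + 1 + 1 ≠ 0 := by linarith
  have : -t + 2 + 1 ≠ 0 := by linarith
  field_simp
  ring

lemma integrable_and_integral_sq_mul_abs_add_rpow_neg (ht : 3 < t) (hc : 0 < c) :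
    Integrable (fun y : ℝ => y ^ 2 * (|y| + c) ^ (-t)) ∧
      ∫ y, y ^ 2 * (|y| + c) ^ (-t) = 4 * c ^ (3 - t) / ((t - 1) * (t - 2) * (t - 3)) := by
  have hsq : ∀ y : ℝ, y ^ 2 * (|y| + c) ^ (-t) = (|y| + c - c) ^ 2 * (|y| + c) ^ (-t) :=
    fun y => by rw [add_sub_cancel_right, sq_abs]
  obtain ⟨hint, hval⟩ := integrableOn_and_integral_Ioi_sub_sq_mul_rpow_neg ht hc
  simp only [hsq]
  refine ⟨integrable_comp_abs_add hint, ?_⟩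
  rw [integral_comp_abs_add (fun u => (u - c) ^ 2 * u ^ (-t)), hval]
  ring

end Line

section Fubini

variable {n : ℕ}

lemma sum_abs_insertNth (i : Fin (n + 1)) (y : ℝ) (z : Fin n → ℝ) :
    ∑ k, |i.insertNth y z k| = |y| + ∑ k, |z k| := by
  simp [Fin.sum_univ_succAbove _ i]

lemma integral_comp_insertNth (i : Fin (n + 1)) (F : (Fin (n + 1) → ℝ) → ℝ) :
    ∫ p : ℝ × (Fin n → ℝ), F (i.insertNth p.1 p.2) = ∫ x, F x :=
  (volume_preserving_piFinSuccAbove (fun _ => ℝ) i).symm.integral_comp' F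

lemma integrable_comp_insertNth_iff (i : Fin (n + 1)) (F : (Fin (n + 1) → ℝ) → ℝ) :
    Integrable (fun p : ℝ × (Fin n → ℝ) => F (i.insertNth p.1 p.2)) ↔ Integrable F :=
  (volume_preserving_piFinSuccAbove (fun _ => ℝ) i).symm.integrable_comp_emb
    (MeasurableEquiv.measurableEmbedding _)

lemma integrable_and_integral_marginal {s K : ℝ}
    (hJ : ∀ c > 0, Integrable (fun z : Fin n → ℝ => ((∑ k, |z k|) + c) ^ (-s)) ∧
      ∫ z : Fin n → ℝ, ((∑ k, |z k|) + c) ^ (-s) = K * c ^ (-(s - n)))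
    (i : Fin (n + 1)) {φ : ℝ → ℝ} (hφ : Measurable φ) {c : ℝ} (hc : 0 < c)
    (hφint : Integrable fun y => φ y * (|y| + c) ^ (-(s - n))) :
    Integrable (fun x : Fin (n + 1) → ℝ => φ (x i) * ((∑ k, |x k|) + c) ^ (-s)) ∧
      ∫ x : Fin (n + 1) → ℝ, φ (x i) * ((∑ k, |x k|) + c) ^ (-s) =
        K * ∫ y, φ y * (|y| + c) ^ (-(s - n)) := by
  set g : ℝ × (Fin n → ℝ) → ℝ := fun p => φ p.1 * ((∑ k, |p.2 k|) + (|p.1| + c)) ^ (-s)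
  have hg_eq : ∀ p : ℝ × (Fin n → ℝ),
      (fun x : Fin (n + 1) → ℝ => φ (x i) * ((∑ k, |x k|) + c) ^ (-s))
        (i.insertNth p.1 p.2) = g p := fun p => by
    simp only [g, Fin.insertNth_apply_same, sum_abs_insertNth]
    ring_nf
  have hbase : ∀ y : ℝ, 0 < |y| + c := fun y => by positivity
  have hfiber : ∀ y, ∫ z, g (y, z) = K * (φ y * (|y| + c) ^ (-(s - n))) := fun y => by
    simp only [g]
    rw [integral_const_mul, (hJ _ (hbase y)).2]
    ring
  have hnorm_fiber : ∀ y, ∫ z, ‖g (y, z)‖ = K * (‖φ y‖ * (|y| + c) ^ (-(s - n))) := fun y => by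
    have hpt : ∀ z : Fin n → ℝ,
        ‖g (y, z)‖ = ‖φ y‖ * ((∑ k, |z k|) + (|y| + c)) ^ (-s) := fun z => by
      rw [norm_mul, norm_of_nonneg (rpow_nonneg (by positivity) _)]
    simp only [hpt]
    rw [integral_const_mul, (hJ _ (hbase y)).2]
    ring
  have hg : Integrable g := by
    refine (integrable_prod_iff (by fun_prop : Measurable g).aestronglyMeasurable).2 ⟨?_, ?_⟩
    · exact .of_forall fun y => (hJ _ (hbase y)).1.const_mul (φ y)
    · simp only [hnorm_fiber]
      refine (hφint.norm.const_mul K).congr (.of_forall fun y => ?_)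
      simp only [norm_mul, norm_of_nonneg (rpow_nonneg (hbase y).le _)]
  constructor
  · rw [← integrable_comp_insertNth_iff i]
    simpa only [hg_eq] using hg
  · rw [← integral_comp_insertNth i]
    simp only [hg_eq]
    rw [Measure.volume_eq_prod, integral_prod g hg]
    simp only [hfiber, integral_const_mul]

end Fubini

lemma integrable_and_integral_sum_abs_add_rpow_neg (n : ℕ) {s : ℝ} (hs : (n : ℝ) < s) :
    ∀ c > 0, Integrable (fun z : Fin n → ℝ => ((∑ k, |z k|) + c) ^ (-s)) ∧
      ∫ z : Fin n → ℝ, ((∑ k, |z k|) + c) ^ (-s) =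
        2 ^ n * Gamma (s - n) / Gamma s * c ^ (-(s - n)) := by
  induction n with
  | zero =>
    intro c hc
    have hΓ : Gamma s ≠ 0 := (Gamma_pos_of_pos (by simpa using hs)).ne'
    simp [hΓ, volume_pi, measureReal_def, Measure.pi_empty_univ]
  | succ n ih =>
    intro c hc
    have hsn : 1 < s - n := by push_cast at hs; linarith
    obtain ⟨hint, hval⟩ := integrable_and_integral_abs_add_rpow_neg hsn hc
    obtain ⟨hint', hval'⟩ := integrable_and_integral_marginal (ih (by linarith)) 0
      (φ := fun _ => 1) measurable_const hc (by simpa only [one_mul] using hint)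
    simp only [one_mul] at hint' hval'
    refine ⟨hint', ?_⟩
    have hrec : Gamma (s - n) = (s - (n + 1)) * Gamma (s - (n + 1)) := by
      rw [← Gamma_add_one (by linarith)]
      ring_nf
    rw [hval', hval]
    push_cast
    rw [hrec, show 1 - (s - n) = -(s - (n + 1)) by ring]
    have : s - n - 1 ≠ 0 := by linarith
    have : Gamma s ≠ 0 := (Gamma_pos_of_pos (by linarith)).ne'
    field_simp
    ring

lemma integral_sq_mul_sum_abs_add_rpow_neg {n : ℕ} (i : Fin (n + 1)) {s c : ℝ}
    (hs : (n : ℝ) + 3 < s) (hc : 0 < c) :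
    ∫ x : Fin (n + 1) → ℝ, x i ^ 2 * ((∑ k, |x k|) + c) ^ (-s) =
      2 ^ (n + 2) * Gamma (s - n - 3) / Gamma s * c ^ (-(s - n - 3)) := by
  obtain ⟨hint, hval⟩ := integrable_and_integral_sq_mul_abs_add_rpow_neg (t := s - n)
    (by linarith) hc
  have hΓ : Gamma (s - n) = (s - n - 1) * (s - n - 2) * (s - n - 3) * Gamma (s - n - 3) := by
    rw [Gamma_eq_mul_Gamma_sub_two (by linarith), show s - n - 2 = s - n - 3 + 1 by ring,
      Gamma_add_one (by linarith)]
    ring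
  rw [(integrable_and_integral_marginal (integrable_and_integral_sum_abs_add_rpow_neg n
    (by linarith)) i (φ := (· ^ 2)) (measurable_id.pow_const 2) hc hint).2, hval, hΓ,
    show 3 - (s - n) = -(s - n - 3) by ring]
  have : s - n - 1 ≠ 0 := by linarith
  have : s - n - 2 ≠ 0 := by linarith
  have : s - n - 3 ≠ 0 := by linarith
  have : Gamma s ≠ 0 := (Gamma_pos_of_pos (by linarith)).ne'
  field_simp
  ring

lemma sum_abs_update_neg {ι : Type*} [Fintype ι] [DecidableEq ι] (x : ι → ℝ) (i : ι) :
    ∑ k, |Function.update x i (-x i) k| = ∑ k, |x k| := by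
  refine Finset.sum_congr rfl fun k _ => ?_
  by_cases hk : k = i
  · subst hk; simp
  · simp [hk]

lemma integral_eq_zero_of_odd_apply {ι : Type*} [Fintype ι] [DecidableEq ι] (i : ι)
    {F : (ι → ℝ) → ℝ} (hF : ∀ x, F (Function.update x i (-x i)) = -F x) : ∫ x, F x = 0 := by
  let e : (ι → ℝ) ≃ᵐ (ι → ℝ) := MeasurableEquiv.piCongrRight
    fun k => if k = i then MeasurableEquiv.neg ℝ else MeasurableEquiv.refl ℝ
  have he : MeasurePreserving e := volume_preserving_pi fun k => by
    by_cases hk : k = i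
    · simpa [hk] using Measure.measurePreserving_neg (volume : Measure ℝ)
    · simpa [hk] using MeasurePreserving.id (volume : Measure ℝ)
  have hreflect : ∀ x, e x = Function.update x i (-x i) := fun x => funext fun k => by
    by_cases hk : k = i
    · subst hk; simp [e, MeasurableEquiv.piCongrRight]
    · simp [e, MeasurableEquiv.piCongrRight, hk]
  have := he.integral_comp' F
  simp only [hreflect, hF, integral_neg] at this
  linarith

/-- For the multivariate Lomax density p(x) ∝ (‖x‖₁+β)^{-(d+α)} with α > 2,
the second moment matrix is E[x xᵀ] = (2β²/((α-1)(α-2))) I_d. -/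
theorem stmt_4 (d : ℕ) (α β : ℝ) (hα : 2 < α) (hβ : 0 < β) :
    let p : (Fin d → ℝ) → ℝ := fun x =>
      β^α * Real.Gamma (d + α) / (2^d * Real.Gamma α) *
        ((∑ i, |x i|) + β) ^ (-((d:ℝ) + α))
    ∀ i j : Fin d, ∫ x : Fin d → ℝ, x i * x j * p x =
      if i = j then 2*β^2/((α-1)*(α-2)) else 0 := by
  intro p i j
  split_ifs with hij
  · subst hij
    obtain ⟨n, rfl⟩ : ∃ n, d = n + 1 := ⟨d - 1, by have := i.pos; omega⟩
    have hmoment := integral_sq_mul_sum_abs_add_rpow_neg i (s := (n + 1 : ℕ) + α)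
      (by push_cast; linarith) hβ
    rw [show ((n + 1 : ℕ) + α : ℝ) - n - 3 = α - 2 by push_cast; ring] at hmoment
    have hpull : ∫ x : Fin (n + 1) → ℝ, x i * x i * p x =
        β ^ α * Gamma ((n + 1 : ℕ) + α) / (2 ^ (n + 1) * Gamma α) *
          ∫ x : Fin (n + 1) → ℝ, x i ^ 2 * ((∑ k, |x k|) + β) ^ (-((n + 1 : ℕ) + α)) := by
      rw [← integral_const_mul]
      congr 1 with x
      simp only [p]
      ring
    have hβ2 : β ^ α * β ^ (-(α - 2)) = β ^ 2 := by
      rw [← rpow_add hβ, ← rpow_two]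
      ring_nf
    have : Gamma ((n + 1 : ℕ) + α) ≠ 0 := (Gamma_pos_of_pos (by positivity)).ne'
    have : Gamma (α - 2) ≠ 0 := (Gamma_pos_of_pos (by linarith)).ne'
    have : α - 1 ≠ 0 := by linarith
    have : α - 2 ≠ 0 := by linarith
    rw [hpull, hmoment, Gamma_eq_mul_Gamma_sub_two hα]
    field_simp
    rw [pow_succ, pow_succ, ← hβ2]
    ring
  · refine integral_eq_zero_of_odd_apply i fun x => ?_
    simp only [p, sum_abs_update_neg, Function.update_self, Function.update_of_ne (Ne.symm hij)]
    ring
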